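/- In the cylindrical form of the Gödel metric with line element ds² = 4a²[dt² - dr² - dy² + (sinh⁴r - sinh²r)dφ² + 2√2 sinh²r dφ dt], the circle γ(s) = (R, sα, 0, t₀) (constant r = R, y = 0, t = t₀, with α ≠ 0) has tangent vector of squared norm (sinh⁴R - sinh²R)·4a²α², which is strictly positive if and only if sinh R > 1, i.e., if and only if R > log(1+√2). Hence for R > log(1+√2) the circle is a closed timelike curve. -/

import Mathlib

open Real Matrix

/-- Gödel's metric in cylindrical coordinates `(r, φ, y, t)`:
`ds² = 4a²[dt² - dr² - dy² + (sinh⁴r - sinh²r)dφ² + 2√2 sinh²r dφ dt]`. -/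
noncomputable def godelMetricCyl (a r : ℝ) : Matrix (Fin 4) (Fin 4) ℝ :=
  (4 * a ^ 2) • !![-1, 0, 0, 0;
                   0, sinh r ^ 4 - sinh r ^ 2, 0, Real.sqrt 2 * sinh r ^ 2;
                   0, 0, -1, 0;
                   0, Real.sqrt 2 * sinh r ^ 2, 0, 1]

/-! For `R > 0` the angular direction `∂_φ` has squared norm `4a²(sinh⁴R - sinh²R)`,
whose sign is that of `sinh R - 1`; and `sinh R = 1` exactly at `R = arsinh 1 = log(1 + √2)`.
Since `φ` is periodic, the orbits of `∂_φ` beyond that radius are closed timelike curves. -/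

theorem godelMetricCyl_quadForm_phi (a r α : ℝ) :
    (![0, α, 0, 0] ⬝ᵥ godelMetricCyl a r *ᵥ ![0, α, 0, 0]) =
      (sinh r ^ 4 - sinh r ^ 2) * (4 * a ^ 2 * α ^ 2) := by
  simp only [dotProduct, mulVec, godelMetricCyl, Matrix.smul_apply, of_apply, cons_val',
    cons_val_fin_one, smul_eq_mul, Fin.sum_univ_four, Fin.isValue, cons_val_zero, cons_val_one,
    cons_val, mul_zero, zero_mul, zero_add, add_zero]
  ring

theorem pow_four_sub_sq_pos_iff {K : Type*} [Field K] [LinearOrder K] [IsStrictOrderedRing K]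
    {x : K} (hx : 0 < x) : 0 < x ^ 4 - x ^ 2 ↔ 1 < x := by
  have hfactor : x ^ 4 - x ^ 2 = x ^ 2 * ((x - 1) * (x + 1)) := by ring
  rw [hfactor, mul_pos_iff_of_pos_left (by positivity),
    mul_pos_iff_of_pos_right (by linarith), sub_pos]

theorem Real.arsinh_one : arsinh 1 = log (1 + √2) := by
  norm_num [arsinh, add_comm]

theorem Real.one_lt_sinh_iff {x : ℝ} : 1 < sinh x ↔ log (1 + √2) < x := by
  rw [← arsinh_one, ← sinh_lt_sinh (x := arsinh 1), sinh_arsinh]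

/-- The circle `γ(s) = (R, sα, 0, t₀)` has tangent `(0, α, 0, 0)` of squared
norm `4a²α²(sinh⁴R - sinh²R)`, which is positive iff `sinh R > 1`, iff
`R > log(1+√2)`; hence for `R > log(1+√2)` it is a closed timelike curve. -/
theorem godel_closed_timelike_circle (a α R : ℝ) (ha : 0 < a) (hα : α ≠ 0)
    (hR : 0 < R) :
    let v : Fin 4 → ℝ := ![0, α, 0, 0]
    (v ⬝ᵥ godelMetricCyl a R *ᵥ v) = (sinh R ^ 4 - sinh R ^ 2) * (4 * a ^ 2 * α ^ 2) ∧
    ((0 : ℝ) < v ⬝ᵥ godelMetricCyl a R *ᵥ v ↔ 1 < sinh R) ∧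
    ((0 : ℝ) < v ⬝ᵥ godelMetricCyl a R *ᵥ v ↔ Real.log (1 + Real.sqrt 2) < R) := by
  intro v
  have hnorm := godelMetricCyl_quadForm_phi a R α
  have hscale : 0 < 4 * a ^ 2 * α ^ 2 := by positivity
  have htimelike : 0 < v ⬝ᵥ godelMetricCyl a R *ᵥ v ↔ 1 < sinh R := by
    rw [hnorm, mul_pos_iff_of_pos_right hscale, pow_four_sub_sq_pos_iff (sinh_pos_iff.2 hR)]
  exact ⟨hnorm, htimelike, htimelike.trans one_lt_sinh_iff⟩
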